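/- arXiv:2506.04026 — 3 statements merged into one kernel-verified Lean document; each statement's English description precedes it below -/
import Mathlib

section
/- Let D be an m×m symmetric real matrix, b, u ∈ ℝ^m, a, c, κ ∈ ℝ, and suppose the symmetric matrix M := [[a, bᵀ], [b, D]] is positive definite. Let w := (c, u) ∈ ℝ^{m+1} be the vector with first coordinate c followed by u. Then κ − wᵀ M⁻¹ w ≤ κ − uᵀ D⁻¹ u, i.e., the posterior variance after adding a data point is at most the posterior variance before adding it. -/
open Matrix

/-!
For positive definite `M`, completing the square gives the variational formula
`wᵀ M⁻¹ w = max_x (2 xᵀw - xᵀ M x)`. Restricting the maximum to vectors `x = (0, y)` that vanish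
on the new data point turns the objective into `2 yᵀu - yᵀ D y`, whose maximum is `uᵀ D⁻¹ u`;
a maximum over fewer vectors is smaller.
-/

namespace Matrix.PosDef

variable {n m : Type*} [Fintype n] [Fintype m]

theorem dotProduct_mulVec_comm {M : Matrix n n ℝ} (hM : M.PosDef) (x y : n → ℝ) :
    x ⬝ᵥ (M *ᵥ y) = y ⬝ᵥ (M *ᵥ x) := by
  rw [dotProduct_mulVec, ← mulVec_transpose, ← conjTranspose_eq_transpose_of_trivial, hM.1,
    dotProduct_comm]

theorem mulVec_inv_mulVec [DecidableEq n] {M : Matrix n n ℝ} (hM : M.PosDef) (w : n → ℝ) :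
    M *ᵥ (M⁻¹ *ᵥ w) = w := by
  rw [mulVec_mulVec, mul_nonsing_inv M ((isUnit_iff_isUnit_det M).mp hM.isUnit), one_mulVec]

theorem two_mul_dotProduct_sub_le_dotProduct_inv_mulVec [DecidableEq n] {M : Matrix n n ℝ}
    (hM : M.PosDef) (x w : n → ℝ) : 2 * (x ⬝ᵥ w) - x ⬝ᵥ (M *ᵥ x) ≤ w ⬝ᵥ (M⁻¹ *ᵥ w) := by
  set z := M⁻¹ *ᵥ w
  have hMz : M *ᵥ z = w := hM.mulVec_inv_mulVec w
  have hsq : 0 ≤ (x - z) ⬝ᵥ (M *ᵥ (x - z)) := by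
    simpa using hM.posSemidef.dotProduct_mulVec_nonneg (x - z)
  have hexpand : (x - z) ⬝ᵥ (M *ᵥ (x - z)) = x ⬝ᵥ (M *ᵥ x) - 2 * (x ⬝ᵥ w) + w ⬝ᵥ z := by
    rw [mulVec_sub, dotProduct_sub, sub_dotProduct, sub_dotProduct,
      hM.dotProduct_mulVec_comm z x, hMz, dotProduct_comm z w]
    ring
  linarith

theorem dotProduct_inv_mulVec_le_fromBlocks [DecidableEq n] [DecidableEq m] {A : Matrix n n ℝ}
    {B : Matrix n m ℝ} {C : Matrix m n ℝ} {D : Matrix m m ℝ} (hM : (fromBlocks A B C D).PosDef)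
    (c : n → ℝ) (u : m → ℝ) :
    u ⬝ᵥ (D⁻¹ *ᵥ u) ≤ Sum.elim c u ⬝ᵥ ((fromBlocks A B C D)⁻¹ *ᵥ Sum.elim c u) := by
  have hD : D.PosDef := hM.submatrix Sum.inr_injective
  set v := D⁻¹ *ᵥ u
  have hDv : D *ᵥ v = u := hD.mulVec_inv_mulVec u
  set x : n ⊕ m → ℝ := Sum.elim 0 v
  have hquad : x ⬝ᵥ (fromBlocks A B C D *ᵥ x) = v ⬝ᵥ u := by
    simp only [x, fromBlocks_mulVec, Sum.elim_comp_inl, Sum.elim_comp_inr, mulVec_zero, zero_add,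
      hDv, sumElim_dotProduct_sumElim, zero_dotProduct]
  have hlin : x ⬝ᵥ Sum.elim c u = v ⬝ᵥ u := by
    simp only [x, sumElim_dotProduct_sumElim, zero_dotProduct, zero_add]
  calc u ⬝ᵥ v = 2 * (x ⬝ᵥ Sum.elim c u) - x ⬝ᵥ (fromBlocks A B C D *ᵥ x) := by
        rw [hquad, hlin, dotProduct_comm]; ring
    _ ≤ _ := hM.two_mul_dotProduct_sub_le_dotProduct_inv_mulVec x (Sum.elim c u)

end Matrix.PosDef

theorem posterior_variance_decreases_general
    {m : ℕ} (D : Matrix (Fin m) (Fin m) ℝ)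
    (b u : Fin m → ℝ) (a c κ : ℝ)
    (hM : (Matrix.fromBlocks
        (Matrix.of (fun (_ : Fin 1) (_ : Fin 1) => a))
        (Matrix.of (fun (_ : Fin 1) (j : Fin m) => b j))
        (Matrix.of (fun (i : Fin m) (_ : Fin 1) => b i)) D).PosDef) :
    κ - (Sum.elim (fun _ : Fin 1 => c) u) ⬝ᵥ
        ((Matrix.fromBlocks
            (Matrix.of (fun (_ : Fin 1) (_ : Fin 1) => a))
            (Matrix.of (fun (_ : Fin 1) (j : Fin m) => b j))
            (Matrix.of (fun (i : Fin m) (_ : Fin 1) => b i)) D)⁻¹ *ᵥ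
          Sum.elim (fun _ : Fin 1 => c) u) ≤
      κ - u ⬝ᵥ (D⁻¹ *ᵥ u) :=
  sub_le_sub_left (hM.dotProduct_inv_mulVec_le_fromBlocks _ u) κ

/-- Monotonicity of the Gaussian-process posterior variance: if the bordered matrix
`M = [[a, bᵀ], [b, D]]` is positive definite, then the posterior variance after
adding a data point is at most the posterior variance before adding it:
`κ - wᵀ M⁻¹ w ≤ κ - uᵀ D⁻¹ u` with `w = (c, u)`. -/
theorem posterior_variance_decreases
    {m : ℕ} (D : Matrix (Fin m) (Fin m) ℝ) (hD : D.IsSymm)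
    (b u : Fin m → ℝ) (a c κ : ℝ)
    (hM : (Matrix.fromBlocks
        (Matrix.of (fun (_ : Fin 1) (_ : Fin 1) => a))
        (Matrix.of (fun (_ : Fin 1) (j : Fin m) => b j))
        (Matrix.of (fun (i : Fin m) (_ : Fin 1) => b i)) D).PosDef) :
    κ - (Sum.elim (fun _ : Fin 1 => c) u) ⬝ᵥ
        ((Matrix.fromBlocks
            (Matrix.of (fun (_ : Fin 1) (_ : Fin 1) => a))
            (Matrix.of (fun (_ : Fin 1) (j : Fin m) => b j))
            (Matrix.of (fun (i : Fin m) (_ : Fin 1) => b i)) D)⁻¹ *ᵥ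
          Sum.elim (fun _ : Fin 1 => c) u) ≤
      κ - u ⬝ᵥ (D⁻¹ *ᵥ u) :=
  posterior_variance_decreases_general D b u a c κ hM
end

section
/- Let (X, Σ, μ) be a measure space with μ a probability measure. Let D be an m×m symmetric invertible real matrix, b ∈ ℝ^m with s := a − bᵀ D⁻¹ b ≠ 0 for a scalar a ∈ ℝ, and set M := [[a, bᵀ], [b, D]]. Let κ, c : X → ℝ and u : X → ℝ^m be measurable functions, and define σ²_A(x) := κ(x) − u(x)ᵀ D⁻¹ u(x) and σ²_{A∪i}(x) := κ(x) − w(x)ᵀ M⁻¹ w(x), where w(x) := (c(x), u(x)) ∈ ℝ^{m+1}. If σ²_A and x ↦ (c(x) − bᵀ D⁻¹ u(x))² are both μ-integrable, then σ²_{A∪i} is μ-integrable and ∫ σ²_{A∪i} dμ = ∫ σ²_A dμ − s⁻¹ ∫ (c(x) − bᵀ D⁻¹ u(x))² dμ(x). -/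
/-!
Inverting `M = [[a, bᵀ], [b, D]]` blockwise through the Schur complement `s = a - bᵀ D⁻¹ b` and
completing the square gives, pointwise, `wᵀ M⁻¹ w = uᵀ D⁻¹ u + s⁻¹ (c - bᵀ D⁻¹ u)²`; the symmetry
of `D` is what identifies the two cross terms. Hence `σ²_{A∪i} = σ²_A - s⁻¹ (c - bᵀ D⁻¹ u)²`, and
the update of the integrated variance is linearity of the integral.
-/

open Matrix MeasureTheory

namespace Matrix

variable {m n α : Type*} [Fintype n] [CommRing α]

theorem replicateRow_mul_mul_transpose_replicateRow {ι : Type*} (b : n → α) (K : Matrix n n α) :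
    replicateRow ι b * K * (replicateRow ι b)ᵀ = of fun _ _ => b ⬝ᵥ (K *ᵥ b) := by
  rw [← replicateRow_vecMul, transpose_replicateRow, replicateRow_mul_replicateCol,
    dotProduct_mulVec]

variable [Fintype m] [DecidableEq m] [DecidableEq n]

theorem sumElim_dotProduct_inv_fromBlocks_mulVec_sumElim (A : Matrix m m α) (B : Matrix m n α)
    (D : Matrix n n α) (hD : D.IsSymm) (hDdet : IsUnit D.det)
    (hSdet : IsUnit (A - B * D⁻¹ * Bᵀ).det) (x : m → α) (y : n → α) :
    Sum.elim x y ⬝ᵥ ((fromBlocks A B Bᵀ D)⁻¹ *ᵥ Sum.elim x y) =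
      y ⬝ᵥ (D⁻¹ *ᵥ y) +
        (x - B *ᵥ D⁻¹ *ᵥ y) ⬝ᵥ ((A - B * D⁻¹ * Bᵀ)⁻¹ *ᵥ (x - B *ᵥ D⁻¹ *ᵥ y)) := by
  let := D.invertibleOfIsUnitDet hDdet
  let := (A - B * ⅟D * Bᵀ).invertibleOfIsUnitDet (by rwa [invOf_eq_nonsing_inv])
  let := fromBlocks₂₂Invertible A B Bᵀ D
  have hDinv_symm : (D⁻¹)ᵀ = D⁻¹ := by rw [transpose_nonsing_inv, hD.eq]
  have adjoint : ∀ v w, v ⬝ᵥ (D⁻¹ *ᵥ Bᵀ *ᵥ w) = (B *ᵥ D⁻¹ *ᵥ v) ⬝ᵥ w := fun v w => by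
    rw [dotProduct_mulVec, dotProduct_mulVec, vecMul_transpose, ← mulVec_transpose, hDinv_symm]
  rw [← invOf_eq_nonsing_inv (fromBlocks _ _ _ _), invOf_fromBlocks₂₂_eq]
  simp only [invOf_eq_nonsing_inv, fromBlocks_mulVec, sumElim_dotProduct_sumElim,
    Sum.elim_comp_inl, Sum.elim_comp_inr, ← mulVec_mulVec, neg_mulVec, add_mulVec, mulVec_sub,
    dotProduct_add, dotProduct_neg, dotProduct_sub, sub_dotProduct, adjoint]
  ring

theorem sumElim_dotProduct_inv_fromBlocks_replicateRow_mulVec_sumElim {ι K : Type*}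
    [Fintype ι] [DecidableEq ι] [Unique ι] [Field K] (a : K) (b : n → K) (D : Matrix n n K) (hD : D.IsSymm) (hDdet : IsUnit D.det)
    (hs : a - b ⬝ᵥ (D⁻¹ *ᵥ b) ≠ 0) (c : K) (y : n → K) :
    Sum.elim (fun _ : ι => c) y ⬝ᵥ
        ((fromBlocks (of fun _ _ => a) (replicateRow ι b) (replicateRow ι b)ᵀ D)⁻¹ *ᵥ
          Sum.elim (fun _ : ι => c) y) =
      y ⬝ᵥ (D⁻¹ *ᵥ y) + (a - b ⬝ᵥ (D⁻¹ *ᵥ b))⁻¹ * (c - b ⬝ᵥ (D⁻¹ *ᵥ y)) ^ 2 := by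
  have hschur : of (fun _ _ => a) - replicateRow ι b * D⁻¹ * (replicateRow ι b)ᵀ =
      of fun _ _ => a - b ⬝ᵥ (D⁻¹ *ᵥ b) := by
    rw [replicateRow_mul_mul_transpose_replicateRow]; rfl
  rw [sumElim_dotProduct_inv_fromBlocks_mulVec_sumElim _ _ _ hD hDdet
    (by rwa [hschur, det_unique, of_apply, isUnit_iff_ne_zero]), hschur,
    inv_subsingleton (of fun _ _ : ι => a - b ⬝ᵥ (D⁻¹ *ᵥ b))]
  simp only [replicateRow_mulVec_eq_const, dotProduct, Fintype.sum_unique, mulVec_diagonal,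
    of_apply, Ring.inverse_eq_inv, Pi.sub_apply, Function.const_apply]
  ring

end Matrix

theorem integrable_and_integral_eq_sub_const_mul {X : Type*} [MeasurableSpace X] {μ : Measure X}
    {f g h : X → ℝ} (hf : Integrable f μ) (hg : Integrable g μ) (r : ℝ)
    (hh : ∀ x, h x = f x - r * g x) :
    Integrable h μ ∧ ∫ x, h x ∂μ = ∫ x, f x ∂μ - r * ∫ x, g x ∂μ := by
  obtain rfl : h = fun x => f x - r * g x := funext hh
  exact ⟨hf.sub (hg.const_mul r), by rw [integral_sub hf (hg.const_mul r), integral_const_mul]⟩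

theorem integrated_variance_update_general
    {X : Type*} [MeasurableSpace X] (μ : Measure X)
    {m : ℕ} (D : Matrix (Fin m) (Fin m) ℝ) (hD : D.IsSymm) (hDinv : IsUnit D.det)
    (b : Fin m → ℝ) (a : ℝ)
    (hs : a - b ⬝ᵥ (D⁻¹ *ᵥ b) ≠ 0)
    (κ c : X → ℝ) (u : X → Fin m → ℝ)
    (hIntA : Integrable (fun x => κ x - u x ⬝ᵥ (D⁻¹ *ᵥ u x)) μ)
    (hIntSq : Integrable (fun x => (c x - b ⬝ᵥ (D⁻¹ *ᵥ u x)) ^ 2) μ) :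
    Integrable (fun x => κ x - (Sum.elim (fun _ : Fin 1 => c x) (u x)) ⬝ᵥ
        ((Matrix.fromBlocks
            (Matrix.of (fun (_ : Fin 1) (_ : Fin 1) => a))
            (Matrix.of (fun (_ : Fin 1) (j : Fin m) => b j))
            (Matrix.of (fun (i : Fin m) (_ : Fin 1) => b i)) D)⁻¹ *ᵥ
          Sum.elim (fun _ : Fin 1 => c x) (u x))) μ ∧
      ∫ x, (κ x - (Sum.elim (fun _ : Fin 1 => c x) (u x)) ⬝ᵥ
        ((Matrix.fromBlocks
            (Matrix.of (fun (_ : Fin 1) (_ : Fin 1) => a))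
            (Matrix.of (fun (_ : Fin 1) (j : Fin m) => b j))
            (Matrix.of (fun (i : Fin m) (_ : Fin 1) => b i)) D)⁻¹ *ᵥ
          Sum.elim (fun _ : Fin 1 => c x) (u x))) ∂μ =
      ∫ x, (κ x - u x ⬝ᵥ (D⁻¹ *ᵥ u x)) ∂μ -
        (a - b ⬝ᵥ (D⁻¹ *ᵥ b))⁻¹ * ∫ x, (c x - b ⬝ᵥ (D⁻¹ *ᵥ u x)) ^ 2 ∂μ := by
  refine integrable_and_integral_eq_sub_const_mul hIntA hIntSq _ fun x => ?_
  rw [show of (fun (_ : Fin 1) (j : Fin m) => b j) = replicateRow (Fin 1) b from rfl,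
    show of (fun (i : Fin m) (_ : Fin 1) => b i) = (replicateRow (Fin 1) b)ᵀ from rfl,
    sumElim_dotProduct_inv_fromBlocks_replicateRow_mulVec_sumElim (ι := Fin 1) a b D hD hDinv hs]
  ring

/-- Iterative update of the Integrated Variance (Theorem 1): with
`M = [[a, bᵀ], [b, D]]`, `s = a - bᵀ D⁻¹ b ≠ 0`, posterior variances
`σ²_A(x) = κ(x) - u(x)ᵀ D⁻¹ u(x)` and `σ²_{A∪i}(x) = κ(x) - w(x)ᵀ M⁻¹ w(x)` with
`w(x) = (c(x), u(x))`, if `σ²_A` and `x ↦ (c(x) - bᵀ D⁻¹ u(x))²` are integrable, then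
`σ²_{A∪i}` is integrable and
`∫ σ²_{A∪i} dμ = ∫ σ²_A dμ - s⁻¹ ∫ (c(x) - bᵀ D⁻¹ u(x))² dμ(x)`. -/
theorem integrated_variance_update
    {X : Type*} [MeasurableSpace X] (μ : Measure X) [IsProbabilityMeasure μ]
    {m : ℕ} (D : Matrix (Fin m) (Fin m) ℝ) (hD : D.IsSymm) (hDinv : IsUnit D.det)
    (b : Fin m → ℝ) (a : ℝ)
    (hs : a - b ⬝ᵥ (D⁻¹ *ᵥ b) ≠ 0)
    (κ c : X → ℝ) (u : X → Fin m → ℝ)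
    (hκ : Measurable κ) (hc : Measurable c) (hu : Measurable u)
    (hIntA : Integrable (fun x => κ x - u x ⬝ᵥ (D⁻¹ *ᵥ u x)) μ)
    (hIntSq : Integrable (fun x => (c x - b ⬝ᵥ (D⁻¹ *ᵥ u x)) ^ 2) μ) :
    Integrable (fun x => κ x - (Sum.elim (fun _ : Fin 1 => c x) (u x)) ⬝ᵥ
        ((Matrix.fromBlocks
            (Matrix.of (fun (_ : Fin 1) (_ : Fin 1) => a))
            (Matrix.of (fun (_ : Fin 1) (j : Fin m) => b j))
            (Matrix.of (fun (i : Fin m) (_ : Fin 1) => b i)) D)⁻¹ *ᵥ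
          Sum.elim (fun _ : Fin 1 => c x) (u x))) μ ∧
      ∫ x, (κ x - (Sum.elim (fun _ : Fin 1 => c x) (u x)) ⬝ᵥ
        ((Matrix.fromBlocks
            (Matrix.of (fun (_ : Fin 1) (_ : Fin 1) => a))
            (Matrix.of (fun (_ : Fin 1) (j : Fin m) => b j))
            (Matrix.of (fun (i : Fin m) (_ : Fin 1) => b i)) D)⁻¹ *ᵥ
          Sum.elim (fun _ : Fin 1 => c x) (u x))) ∂μ =
      ∫ x, (κ x - u x ⬝ᵥ (D⁻¹ *ᵥ u x)) ∂μ -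
        (a - b ⬝ᵥ (D⁻¹ *ᵥ b))⁻¹ * ∫ x, (c x - b ⬝ᵥ (D⁻¹ *ᵥ u x)) ^ 2 ∂μ :=
  integrated_variance_update_general μ D hD hDinv b a hs κ c u hIntA hIntSq
end

section
/- Let K be an n×n real symmetric positive definite matrix and let F be an n×p real matrix with p ≤ n whose columns are linearly independent (rank F = p). Then the (n+p)×(n+p) block matrix [[K, F], [Fᵀ, 0]] is invertible. -/
/-!
If `[[K, F], [Fᴴ, 0]] (x, y) = 0`, then `Fᴴ x = 0` and `K x = -F y`, so
`xᴴ K x = -xᴴ F y = -(Fᴴ x)ᴴ y = 0`; positive definiteness forces `x = 0`, and then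
`F y = 0` forces `y = 0` because the columns of `F` are independent. An injective square
matrix over a field is invertible.
-/

open Matrix

namespace Matrix

variable {m n R : Type*} [Fintype n]

theorem mulVec_injective_of_rank_eq_card [Field R] {F : Matrix m n R}
    (hF : F.rank = Fintype.card n) : Function.Injective F.mulVec :=
  mulVec_injective_iff.mpr <| linearIndependent_iff_card_eq_finrank_span.mpr <| by
    rw [← hF, rank_eq_finrank_span_cols]
    rfl

theorem mulVec_fromBlocks_conjTranspose_injective [Fintype m] [CommRing R] [PartialOrder R]
    [StarRing R] {K : Matrix m m R} (hK : K.PosDef) {F : Matrix m n R}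
    (hF : Function.Injective F.mulVec) : Function.Injective (fromBlocks K F Fᴴ 0).mulVec := by
  refine (injective_iff_map_eq_zero (fromBlocks K F Fᴴ 0).mulVecLin).mpr fun v hv => ?_
  set x := v ∘ Sum.inl
  set y := v ∘ Sum.inr
  obtain ⟨htop, hbot⟩ : K *ᵥ x + F *ᵥ y = 0 ∧ Fᴴ *ᵥ x = 0 := by
    rwa [← Sum.elim_zero_zero, mulVecLin_apply, fromBlocks_mulVec, Sum.elim_eq_iff, zero_mulVec,
      add_zero] at hv
  have hx : x = 0 := by
    by_contra hx
    have hquad : star x ⬝ᵥ K *ᵥ x = 0 := calc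
      star x ⬝ᵥ K *ᵥ x = star x ⬝ᵥ (K *ᵥ x + F *ᵥ y) - star (Fᴴ *ᵥ x) ⬝ᵥ y := by
        rw [dotProduct_add, dotProduct_mulVec _ F, star_mulVec, conjTranspose_conjTranspose]
        abel
      _ = 0 := by simp [htop, hbot]
    exact (hK.dotProduct_mulVec_pos hx).ne' hquad
  have hy : y = 0 := hF <| by simpa [hx] using htop
  ext (i | j)
  · exact congrFun hx i
  · exact congrFun hy j

theorem isUnit_fromBlocks_conjTranspose [Fintype m] [Field R] [PartialOrder R] [StarRing R]
    [DecidableEq m] [DecidableEq n] {K : Matrix m m R} (hK : K.PosDef) {F : Matrix m n R}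
    (hF : Function.Injective F.mulVec) : IsUnit (fromBlocks K F Fᴴ 0) :=
  mulVec_injective_iff_isUnit.mp (mulVec_fromBlocks_conjTranspose_injective hK hF)

end Matrix

theorem kriging_system_invertible_general
    {n p : ℕ}
    (K : Matrix (Fin n) (Fin n) ℝ) (hK : K.PosDef)
    (F : Matrix (Fin n) (Fin p) ℝ) (hF : F.rank = p) :
    IsUnit (Matrix.fromBlocks K F Fᵀ (0 : Matrix (Fin p) (Fin p) ℝ)).det := by
  have hFinj : Function.Injective F.mulVec :=
    mulVec_injective_of_rank_eq_card (by rw [hF, Fintype.card_fin])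
  rw [← isUnit_iff_isUnit_det, ← conjTranspose_eq_transpose_of_trivial]
  exact isUnit_fromBlocks_conjTranspose hK hFinj

/-- The Universal Kriging system matrix is invertible: if `K` is symmetric positive
definite and `F` has full column rank `p ≤ n`, then the bordered block matrix
`[[K, F], [Fᵀ, 0]]` is invertible. -/
theorem kriging_system_invertible
    {n p : ℕ} (hpn : p ≤ n)
    (K : Matrix (Fin n) (Fin n) ℝ) (hK : K.PosDef)
    (F : Matrix (Fin n) (Fin p) ℝ) (hF : F.rank = p) :
    IsUnit (Matrix.fromBlocks K F Fᵀ (0 : Matrix (Fin p) (Fin p) ℝ)).det :=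
  kriging_system_invertible_general K hK F hF
end
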